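/- arXiv:2201.09115 — 6 statements merged into one kernel-verified Lean document; each statement's English description precedes it below -/
import Mathlib

section
/- Let 1 ≤ s ≤ t be integers and let G1, G2 be graphs with no K_{s,t}-minor. Suppose C = V(G1) ∩ V(G2) is a clique in both G1 and G2 and |C| < s. Then the union graph G1 ∪ G2 has no K_{s,t}-minor. -/
def HasKstMinor {V : Type*} (G : SimpleGraph V) (s t : ℕ) : Prop :=
  ∃ (Z : Fin s → Set V) (W : Fin t → Set V),
    (∀ i, (Z i).Nonempty) ∧ (∀ j, (W j).Nonempty) ∧
    (∀ i j, i ≠ j → Disjoint (Z i) (Z j)) ∧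
    (∀ i j, i ≠ j → Disjoint (W i) (W j)) ∧
    (∀ i j, Disjoint (Z i) (W j)) ∧
    (∀ i, (G.induce (Z i)).Connected) ∧
    (∀ j, (G.induce (W j)).Connected) ∧
    (∀ i j, ∃ x ∈ Z i, ∃ y ∈ W j, G.Adj x y)

section Aux

variable {V : Type*} {A B : Set V} {G1 G2 : SimpleGraph V}

/-- Key walk lemma: a walk in `(G1 ⊔ G2).induce X` ending in `A` can be
shortcut to a walk in `G1.induce (X ∩ A)` starting at a controlled vertex. -/
lemma walkA (hG1 : ∀ x y, G1.Adj x y → x ∈ A ∧ y ∈ A)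
    (hG2 : ∀ x y, G2.Adj x y → x ∈ B ∧ y ∈ B)
    (hC1 : ∀ x ∈ A ∩ B, ∀ y ∈ A ∩ B, x ≠ y → G1.Adj x y)
    (X : Set V) {x y : ↥X} (p : ((G1 ⊔ G2).induce X).Walk x y)
    (y' : ↥(X ∩ A)) (hyy : (y' : V) = (y : V)) :
    ∃ x' : ↥(X ∩ A), (G1.induce (X ∩ A)).Reachable x' y' ∧
      ((x : V) ∈ A → (x' : V) = x) ∧ ((x : V) ∉ A → (x' : V) ∈ A ∩ B) := by
  induction p with
  | nil =>
    exact ⟨y', SimpleGraph.Reachable.refl _, fun _ => hyy,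
      fun h => absurd (hyy ▸ y'.2.2) h⟩
  | @cons x z y h p ih =>
    obtain ⟨z', hz'reach, hz'A, hz'B⟩ := ih hyy
    have hadj : G1.Adj (x : V) z ∨ G2.Adj (x : V) z := h
    by_cases hxA : (x : V) ∈ A
    · refine ⟨⟨x, x.2, hxA⟩, ?_, fun _ => rfl, fun hc => absurd hxA hc⟩
      by_cases hzA : (z : V) ∈ A
      · have hz'eq : (z' : V) = z := hz'A hzA
        have hreach : (G1.induce (X ∩ A)).Reachable ⟨x, x.2, hxA⟩ z' := by
          rcases hadj with h1' | h2'
          · exact (SimpleGraph.Reachable.refl _).trans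
              (SimpleGraph.Adj.reachable (by
                show G1.Adj (x : V) (z' : V); rw [hz'eq]; exact h1'))
          · -- G2 edge inside A: both endpoints in A ∩ B
            have hxB : (x : V) ∈ B := (hG2 _ _ h2').1
            have hzB : (z : V) ∈ B := (hG2 _ _ h2').2
            have hne : (x : V) ≠ (z : V) := h2'.ne
            exact SimpleGraph.Adj.reachable (by
              show G1.Adj (x : V) (z' : V); rw [hz'eq]
              exact hC1 _ ⟨hxA, hxB⟩ _ ⟨hzA, hzB⟩ hne)
        exact hreach.trans hz'reach
      · -- z ∉ A : edge must be a G2 edge, x ∈ B, so x ∈ A ∩ B, z' ∈ A ∩ B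
        have h2' : G2.Adj (x : V) z := by
          rcases hadj with h1' | h2'
          · exact absurd (hG1 _ _ h1').2 hzA
          · exact h2'
        have hxB : (x : V) ∈ B := (hG2 _ _ h2').1
        have hz'AB : (z' : V) ∈ A ∩ B := hz'B hzA
        by_cases heq : (x : V) = (z' : V)
        · have : (⟨x, x.2, hxA⟩ : ↥(X ∩ A)) = z' := Subtype.ext heq
          rw [this]; exact hz'reach
        · exact (SimpleGraph.Adj.reachable (by
            show G1.Adj (x : V) (z' : V)
            exact hC1 _ ⟨hxA, hxB⟩ _ hz'AB heq)).trans hz'reach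
    · -- x ∉ A
      by_cases hzA : (z : V) ∈ A
      · have h2' : G2.Adj (x : V) z := by
          rcases hadj with h1' | h2'
          · exact absurd (hG1 _ _ h1').1 hxA
          · exact h2'
        have hzB : (z : V) ∈ B := (hG2 _ _ h2').2
        have hz'eq : (z' : V) = z := hz'A hzA
        refine ⟨z', hz'reach, fun hc => absurd hc hxA, fun _ => ?_⟩
        rw [hz'eq]; exact ⟨hzA, hzB⟩
      · exact ⟨z', hz'reach, fun hc => absurd hc hxA, fun _ => hz'B hzA⟩

/-- Crossing lemma: a walk from inside `A` to outside `A` passes through `A ∩ B`. -/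
lemma crossA (hG1 : ∀ x y, G1.Adj x y → x ∈ A ∧ y ∈ A)
    (hG2 : ∀ x y, G2.Adj x y → x ∈ B ∧ y ∈ B)
    (X : Set V) {x y : ↥X} (p : ((G1 ⊔ G2).induce X).Walk x y)
    (hx : (x : V) ∈ A) (hy : (y : V) ∉ A) : ∃ u ∈ X, u ∈ A ∩ B := by
  induction p with
  | nil => exact absurd hx hy
  | @cons x z y h p ih =>
    by_cases hzA : (z : V) ∈ A
    · exact ih hzA hy
    · have hadj : G1.Adj (x : V) z ∨ G2.Adj (x : V) z := h
      rcases hadj with h1' | h2'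
      · exact absurd (hG1 _ _ h1').2 hzA
      · exact ⟨x, x.2, hx, (hG2 _ _ h2').1⟩

/-- A connected set avoiding `A ∩ B` lies entirely in `A` or entirely in `B`. -/
lemma sideA (hAB : A ∪ B = Set.univ)
    (hG1 : ∀ x y, G1.Adj x y → x ∈ A ∧ y ∈ A)
    (hG2 : ∀ x y, G2.Adj x y → x ∈ B ∧ y ∈ B)
    (X : Set V) (hconn : ((G1 ⊔ G2).induce X).Connected)
    (hXC : X ∩ (A ∩ B) = ∅) : X ⊆ A ∨ X ⊆ B := by
  by_cases hA : X ⊆ A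
  · exact Or.inl hA
  · right
    obtain ⟨b, hbX, hbA⟩ := Set.not_subset.mp hA
    intro v hv
    by_cases hvA : (v : V) ∈ A
    · exfalso
      obtain ⟨p⟩ := hconn.preconnected ⟨v, hv⟩ ⟨b, hbX⟩
      obtain ⟨u, huX, huAB⟩ := crossA hG1 hG2 X p hvA hbA
      exact absurd (Set.eq_empty_iff_forall_notMem.mp hXC u) (by simp [huX, huAB])
    · rcases (hAB ▸ Set.mem_univ v : v ∈ A ∪ B) with h | h
      · exact absurd h hvA
      · exact h

/-- Connectivity of the `A`-part. -/
lemma connA (hG1 : ∀ x y, G1.Adj x y → x ∈ A ∧ y ∈ A)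
    (hG2 : ∀ x y, G2.Adj x y → x ∈ B ∧ y ∈ B)
    (hC1 : ∀ x ∈ A ∩ B, ∀ y ∈ A ∩ B, x ≠ y → G1.Adj x y)
    (X : Set V) (hconn : ((G1 ⊔ G2).induce X).Connected)
    (hne : (X ∩ A).Nonempty) : (G1.induce (X ∩ A)).Connected := by
  have hnonempty : Nonempty ↥(X ∩ A) := hne.to_subtype
  refine SimpleGraph.Connected.mk ?_
  rintro ⟨a, haX, haA⟩ ⟨b, hbX, hbA⟩
  obtain ⟨p⟩ := hconn.preconnected ⟨a, haX⟩ ⟨b, hbX⟩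
  obtain ⟨x', hreach, hxA, _⟩ := walkA hG1 hG2 hC1 X p ⟨b, hbX, hbA⟩ rfl
  have : x' = (⟨a, haX, haA⟩ : ↥(X ∩ A)) := Subtype.ext (hxA haA)
  rw [this] at hreach
  exact hreach

/-- Pigeonhole: with fewer than `s` elements in `C`, some of the `s` disjoint
nonempty sets avoids `C`. -/
lemma pigeon {s : ℕ} (C : Set V) (hCfin : C.Finite) (hCcard : C.ncard < s)
    (Z : Fin s → Set V) (hZd : ∀ i j, i ≠ j → Disjoint (Z i) (Z j)) :
    ∃ i, Z i ∩ C = ∅ := by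
  by_contra hcon
  push_neg at hcon
  choose f hf using hcon
  have hinj : Function.Injective f := by
    intro i j hij
    by_contra hne'
    exact (hZd i j hne').ne_of_mem (hf i).1 (hf j).1 hij
  have : s ≤ C.ncard := by
    classical
    have h := Finset.card_le_card_of_injOn (s := Finset.univ) (t := hCfin.toFinset) f
      (fun i _ => (Set.Finite.mem_toFinset hCfin).mpr (hf i).2)
      (fun i _ j _ h => hinj h)
    rw [Set.ncard_eq_toFinset_card C hCfin]
    simpa using h
  omega

/-- Transfer a minor model whose parts all meet `A`, with connecting edges
in `G1` within `A`, to a model in `G1`. -/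
lemma transfer {s t : ℕ} (hG1 : ∀ x y, G1.Adj x y → x ∈ A ∧ y ∈ A)
    (hG2 : ∀ x y, G2.Adj x y → x ∈ B ∧ y ∈ B)
    (hC1 : ∀ x ∈ A ∩ B, ∀ y ∈ A ∩ B, x ≠ y → G1.Adj x y)
    (Z : Fin s → Set V) (W : Fin t → Set V)
    (hZd : ∀ i j, i ≠ j → Disjoint (Z i) (Z j))
    (hWd : ∀ i j, i ≠ j → Disjoint (W i) (W j))
    (hZW : ∀ i j, Disjoint (Z i) (W j))
    (hZc : ∀ i, ((G1 ⊔ G2).induce (Z i)).Connected)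
    (hWc : ∀ j, ((G1 ⊔ G2).induce (W j)).Connected)
    (hZA : ∀ i, (Z i ∩ A).Nonempty) (hWA : ∀ j, (W j ∩ A).Nonempty)
    (hedges : ∀ i j, ∃ x ∈ Z i ∩ A, ∃ y ∈ W j ∩ A, G1.Adj x y) :
    HasKstMinor G1 s t := by
  refine ⟨fun i => Z i ∩ A, fun j => W j ∩ A, hZA, hWA, ?_, ?_, ?_, ?_, ?_, ?_⟩
  · exact fun i j hij => (hZd i j hij).mono Set.inter_subset_left Set.inter_subset_left
  · exact fun i j hij => (hWd i j hij).mono Set.inter_subset_left Set.inter_subset_left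
  · exact fun i j => (hZW i j).mono Set.inter_subset_left Set.inter_subset_left
  · exact fun i => connA hG1 hG2 hC1 (Z i) (hZc i) (hZA i)
  · exact fun j => connA hG1 hG2 hC1 (W j) (hWc j) (hWA j)
  · exact hedges

/-- Main one-sided lemma. -/
lemma main_aux {s t : ℕ} (hAB : A ∪ B = Set.univ)
    (hG1 : ∀ x y, G1.Adj x y → x ∈ A ∧ y ∈ A)
    (hG2 : ∀ x y, G2.Adj x y → x ∈ B ∧ y ∈ B)
    (hC1 : ∀ x ∈ A ∩ B, ∀ y ∈ A ∩ B, x ≠ y → G1.Adj x y)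
    (Z : Fin s → Set V) (W : Fin t → Set V)
    (hZne : ∀ i, (Z i).Nonempty) (hWne : ∀ j, (W j).Nonempty)
    (hZd : ∀ i j, i ≠ j → Disjoint (Z i) (Z j))
    (hWd : ∀ i j, i ≠ j → Disjoint (W i) (W j))
    (hZW : ∀ i j, Disjoint (Z i) (W j))
    (hZc : ∀ i, ((G1 ⊔ G2).induce (Z i)).Connected)
    (hWc : ∀ j, ((G1 ⊔ G2).induce (W j)).Connected)
    (hadj : ∀ i j, ∃ x ∈ Z i, ∃ y ∈ W j, (G1 ⊔ G2).Adj x y)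
    (i0 : Fin s) (j0 : Fin t)
    (hi0 : Z i0 ∩ (A ∩ B) = ∅) (hj0 : W j0 ∩ (A ∩ B) = ∅)
    (hZi0A : Z i0 ⊆ A) : HasKstMinor G1 s t := by
  have hdisjC : ∀ (X : Set V), X ∩ (A ∩ B) = ∅ → ∀ v ∈ X, v ∈ A → v ∉ B := by
    intro X hX v hvX hvA hvB
    exact absurd (Set.eq_empty_iff_forall_notMem.mp hX v) (by simp [hvX, hvA, hvB])
  have hZi0 : Z i0 ⊆ A \ B := fun v hv => ⟨hZi0A hv, hdisjC _ hi0 v hv (hZi0A hv)⟩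
  -- W j0 ⊆ A \ B
  have hWj0A : W j0 ⊆ A := by
    obtain ⟨x, hx, y, hy, hxy⟩ := hadj i0 j0
    have hyA : y ∈ A := by
      rcases hxy with h1' | h2'
      · exact (hG1 _ _ h1').2
      · exact absurd (hG2 _ _ h2').1 (hZi0 hx).2
    rcases sideA hAB hG1 hG2 (W j0) (hWc j0) hj0 with h | h
    · exact h
    · exact absurd (hdisjC _ hj0 y hy hyA) (by simp [h hy])
  have hWj0 : W j0 ⊆ A \ B := fun v hv => ⟨hWj0A hv, hdisjC _ hj0 v hv (hWj0A hv)⟩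
  -- any C-avoiding Z i is in A \ B
  have hZside : ∀ i, Z i ∩ (A ∩ B) = ∅ → Z i ⊆ A \ B := by
    intro i hi
    have hsub : Z i ⊆ A := by
      rcases sideA hAB hG1 hG2 (Z i) (hZc i) hi with h | h
      · exact h
      · exfalso
        obtain ⟨x, hx, y, hy, hxy⟩ := hadj i j0
        rcases hxy with h1' | h2'
        · exact absurd (h hx) (hdisjC _ hi x hx (hG1 _ _ h1').1)
        · exact absurd (hG2 _ _ h2').2 (hWj0 hy).2
    exact fun v hv => ⟨hsub hv, hdisjC _ hi v hv (hsub hv)⟩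
  have hWside : ∀ j, W j ∩ (A ∩ B) = ∅ → W j ⊆ A \ B := by
    intro j hj
    have hsub : W j ⊆ A := by
      rcases sideA hAB hG1 hG2 (W j) (hWc j) hj with h | h
      · exact h
      · exfalso
        obtain ⟨x, hx, y, hy, hxy⟩ := hadj i0 j
        rcases hxy with h1' | h2'
        · exact absurd (h hy) (hdisjC _ hj y hy (hG1 _ _ h1').2)
        · exact absurd (hG2 _ _ h2').1 (hZi0 hx).2
    exact fun v hv => ⟨hsub hv, hdisjC _ hj v hv (hsub hv)⟩
  -- every part meets A
  have hZA : ∀ i, (Z i ∩ A).Nonempty := by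
    intro i
    by_cases hi : Z i ∩ (A ∩ B) = ∅
    · obtain ⟨v, hv⟩ := hZne i
      exact ⟨v, hv, (hZside i hi hv).1⟩
    · obtain ⟨v, hv⟩ := Set.nonempty_iff_ne_empty.mpr hi
      exact ⟨v, hv.1, hv.2.1⟩
  have hWA : ∀ j, (W j ∩ A).Nonempty := by
    intro j
    by_cases hj : W j ∩ (A ∩ B) = ∅
    · obtain ⟨v, hv⟩ := hWne j
      exact ⟨v, hv, (hWside j hj hv).1⟩
    · obtain ⟨v, hv⟩ := Set.nonempty_iff_ne_empty.mpr hj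
      exact ⟨v, hv.1, hv.2.1⟩
  -- the edges
  have hedges : ∀ i j, ∃ x ∈ Z i ∩ A, ∃ y ∈ W j ∩ A, G1.Adj x y := by
    intro i j
    by_cases hi : Z i ∩ (A ∩ B) = ∅
    · obtain ⟨x, hx, y, hy, hxy⟩ := hadj i j
      have h1' : G1.Adj x y := by
        rcases hxy with h1' | h2'
        · exact h1'
        · exact absurd (hG2 _ _ h2').1 (hZside i hi hx).2
      exact ⟨x, ⟨hx, (hG1 _ _ h1').1⟩, y, ⟨hy, (hG1 _ _ h1').2⟩, h1'⟩
    · by_cases hj : W j ∩ (A ∩ B) = ∅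
      · obtain ⟨x, hx, y, hy, hxy⟩ := hadj i j
        have h1' : G1.Adj x y := by
          rcases hxy with h1' | h2'
          · exact h1'
          · exact absurd (hG2 _ _ h2').2 (hWside j hj hy).2
        exact ⟨x, ⟨hx, (hG1 _ _ h1').1⟩, y, ⟨hy, (hG1 _ _ h1').2⟩, h1'⟩
      · obtain ⟨c, hc⟩ := Set.nonempty_iff_ne_empty.mpr hi
        obtain ⟨c', hc'⟩ := Set.nonempty_iff_ne_empty.mpr hj
        have hne : c ≠ c' := fun h =>
          (hZW i j).ne_of_mem hc.1 hc'.1 h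
        exact ⟨c, ⟨hc.1, hc.2.1⟩, c', ⟨hc'.1, hc'.2.1⟩,
          hC1 _ hc.2 _ hc'.2 hne⟩
  exact transfer hG1 hG2 hC1 Z W hZd hWd hZW hZc hWc hZA hWA hedges

end Aux

/-- Gluing two `K_{s,t}`-minor-free graphs along a clique of size `< s` yields a
`K_{s,t}`-minor-free graph.  Here `G1` is a graph with all edges inside `A`,
`G2` a graph with all edges inside `B`, the two graphs agree in making
`C = A ∩ B` a clique, and `G1 ⊔ G2` is the union graph. -/
theorem stmt2 {V : Type*} (s t : ℕ) (hs : 1 ≤ s) (hst : s ≤ t)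
    (A B : Set V) (hAB : A ∪ B = Set.univ)
    (G1 G2 : SimpleGraph V)
    (hG1 : ∀ x y, G1.Adj x y → x ∈ A ∧ y ∈ A)
    (hG2 : ∀ x y, G2.Adj x y → x ∈ B ∧ y ∈ B)
    (hC1 : ∀ x ∈ A ∩ B, ∀ y ∈ A ∩ B, x ≠ y → G1.Adj x y)
    (hC2 : ∀ x ∈ A ∩ B, ∀ y ∈ A ∩ B, x ≠ y → G2.Adj x y)
    (hCfin : (A ∩ B).Finite) (hCcard : (A ∩ B).ncard < s)
    (h1 : ¬ HasKstMinor G1 s t) (h2 : ¬ HasKstMinor G2 s t) :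
    ¬ HasKstMinor (G1 ⊔ G2) s t := by
  rintro ⟨Z, W, hZne, hWne, hZd, hWd, hZW, hZc, hWc, hadj⟩
  obtain ⟨i0, hi0⟩ := pigeon (A ∩ B) hCfin hCcard Z hZd
  obtain ⟨j0, hj0⟩ := pigeon (A ∩ B) hCfin (lt_of_lt_of_le hCcard hst) W hWd
  rcases sideA hAB hG1 hG2 (Z i0) (hZc i0) hi0 with hside | hside
  · exact h1 (main_aux hAB hG1 hG2 hC1 Z W hZne hWne hZd hWd hZW hZc hWc hadj
      i0 j0 hi0 hj0 hside)
  · -- symmetric case: use G2, with roles of A and B swapped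
    have hcomm : G1 ⊔ G2 = G2 ⊔ G1 := sup_comm G1 G2
    have hZc' : ∀ i, ((G2 ⊔ G1).induce (Z i)).Connected := by rw [← hcomm]; exact hZc
    have hWc' : ∀ j, ((G2 ⊔ G1).induce (W j)).Connected := by rw [← hcomm]; exact hWc
    have hadj' : ∀ i j, ∃ x ∈ Z i, ∃ y ∈ W j, (G2 ⊔ G1).Adj x y := by
      rw [← hcomm]; exact hadj
    have hBA : B ∪ A = Set.univ := by rw [Set.union_comm]; exact hAB
    have hC2' : ∀ x ∈ B ∩ A, ∀ y ∈ B ∩ A, x ≠ y → G2.Adj x y := by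
      rw [Set.inter_comm]; exact hC2
    have hi0' : Z i0 ∩ (B ∩ A) = ∅ := by rw [Set.inter_comm B A]; exact hi0
    have hj0' : W j0 ∩ (B ∩ A) = ∅ := by rw [Set.inter_comm B A]; exact hj0
    exact h2 (main_aux hBA hG2 hG1 hC2' Z W hZne hWne hZd hWd hZW hZc' hWc' hadj'
      i0 j0 hi0' hj0' hside)
end

section
/- Suppose a graph G contains K_{s,t} as a minor, witnessed by disjoint connected branch sets Z (s of them) and W (t of them), and G = G1 ∪ G2 where C = V(G1) ∩ V(G2) is a clique of both graphs with |C| < s ≤ t. Then there exist one Z-branch set and one W-branch set that are both disjoint from C, and both are contained in V(G1) \ C or both in V(G2) \ C. -/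
private lemma exists_avoid {V : Type*} {n : ℕ} (C : Set V) (hCfin : C.Finite)
    (hlt : C.ncard < n) (Z : Fin n → Set V)
    (hd : ∀ i j, i ≠ j → Disjoint (Z i) (Z j)) : ∃ i, Z i ∩ C = ∅ := by
  by_contra h
  push_neg at h
  have hne : ∀ i, (Z i ∩ C).Nonempty := h
  choose f hf using hne
  have hinj : Function.Injective f := by
    intro i j hij
    by_contra hne'
    exact (hd i j hne').ne_of_mem (hf i).1 (hf j).1 hij
  have h1 : (Set.range f).ncard ≤ C.ncard :=
    Set.ncard_le_ncard (by rintro _ ⟨i, rfl⟩; exact (hf i).2) hCfin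
  have h2 : (Set.range f).ncard = n := by
    rw [← Nat.card_coe_set_eq, Nat.card_range_of_injective hinj, Nat.card_eq_fintype_card,
      Fintype.card_fin]
  omega

private lemma side_lemma {V : Type*} {A B : Set V} (hAB : A ∪ B = Set.univ)
    {G1 G2 : SimpleGraph V}
    (hG1 : ∀ x y, G1.Adj x y → x ∈ A ∧ y ∈ A)
    (hG2 : ∀ x y, G2.Adj x y → x ∈ B ∧ y ∈ B)
    {S : Set V} (hS : S ∩ (A ∩ B) = ∅)
    (hc : ((G1 ⊔ G2).induce S).Connected) : S ⊆ A \ B ∨ S ⊆ B \ A := by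
  have hside : ∀ v ∈ S, v ∈ A \ B ∨ v ∈ B \ A := by
    intro v hv
    have hvAB : v ∈ A ∪ B := hAB ▸ Set.mem_univ v
    have hnot : v ∉ A ∩ B := fun hmem => (Set.eq_empty_iff_forall_notMem.1 hS v) ⟨hv, hmem⟩
    rcases hvAB with hA | hB
    · exact Or.inl ⟨hA, fun hB => hnot ⟨hA, hB⟩⟩
    · exact Or.inr ⟨hB, fun hA => hnot ⟨hA, hB⟩⟩
  obtain ⟨⟨v0, hv0⟩⟩ := hc.nonempty
  have key : ∀ (a b : S), ((G1 ⊔ G2).induce S).Reachable a b →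
      ((a : V) ∈ A \ B → (b : V) ∈ A \ B) := by
    intro a b hr
    obtain ⟨w⟩ := hr
    induction w with
    | nil => exact id
    | cons hadj p ih =>
      intro ha
      apply ih
      rename_i x y _
      have hxy : (G1 ⊔ G2).Adj x y := hadj
      rcases hxy with h1 | h2
      · exact (hside y y.2).resolve_right (fun hy => hy.2 ((hG1 x y h1).2))
      · exact absurd ((hG2 x y h2).1) ha.2
  rcases hside v0 hv0 with h0 | h0
  · left
    intro u hu
    exact key ⟨v0, hv0⟩ ⟨u, hu⟩ (hc.preconnected _ _) h0
  · right
    intro u hu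
    rcases hside u hu with hA | hB
    · exact absurd (key ⟨u, hu⟩ ⟨v0, hv0⟩ (hc.preconnected _ _) hA).1 h0.2
    · exact hB

/-- If `G = G1 ∪ G2` (with `G1` living on `A`, `G2` on `B`, `C = A ∩ B` a clique of
both, `|C| < s ≤ t`) contains `K_{s,t}` as a minor witnessed by branch sets
`Z` (s of them) and `W` (t of them), then some `Z`-branch set and some `W`-branch
set are both disjoint from `C`, and both lie in `V(G1) \ C = A \ B`
or both lie in `V(G2) \ C = B \ A`. -/
theorem stmt3 {V : Type*} (s t : ℕ) (hst : s ≤ t)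
    (A B : Set V) (hAB : A ∪ B = Set.univ)
    (G1 G2 : SimpleGraph V)
    (hG1 : ∀ x y, G1.Adj x y → x ∈ A ∧ y ∈ A)
    (hG2 : ∀ x y, G2.Adj x y → x ∈ B ∧ y ∈ B)
    (hC1 : ∀ x ∈ A ∩ B, ∀ y ∈ A ∩ B, x ≠ y → G1.Adj x y)
    (hC2 : ∀ x ∈ A ∩ B, ∀ y ∈ A ∩ B, x ≠ y → G2.Adj x y)
    (hCfin : (A ∩ B).Finite) (hCcard : (A ∩ B).ncard < s)
    (Z : Fin s → Set V) (W : Fin t → Set V)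
    (hZne : ∀ i, (Z i).Nonempty) (hWne : ∀ j, (W j).Nonempty)
    (hZd : ∀ i j, i ≠ j → Disjoint (Z i) (Z j))
    (hWd : ∀ i j, i ≠ j → Disjoint (W i) (W j))
    (hZW : ∀ i j, Disjoint (Z i) (W j))
    (hZc : ∀ i, ((G1 ⊔ G2).induce (Z i)).Connected)
    (hWc : ∀ j, ((G1 ⊔ G2).induce (W j)).Connected)
    (hedge : ∀ i j, ∃ x ∈ Z i, ∃ y ∈ W j, (G1 ⊔ G2).Adj x y) :
    ∃ i j, Z i ∩ (A ∩ B) = ∅ ∧ W j ∩ (A ∩ B) = ∅ ∧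
      ((Z i ⊆ A \ B ∧ W j ⊆ A \ B) ∨ (Z i ⊆ B \ A ∧ W j ⊆ B \ A)) := by
  obtain ⟨i, hi⟩ := exists_avoid (A ∩ B) hCfin hCcard Z hZd
  obtain ⟨j, hj⟩ := exists_avoid (A ∩ B) hCfin (lt_of_lt_of_le hCcard hst) W hWd
  refine ⟨i, j, hi, hj, ?_⟩
  have hZs := side_lemma hAB hG1 hG2 hi (hZc i)
  have hWs := side_lemma hAB hG1 hG2 hj (hWc j)
  obtain ⟨x, hx, y, hy, hadj⟩ := hedge i j
  rcases hZs with hZA | hZB <;> rcases hWs with hWA | hWB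
  · exact Or.inl ⟨hZA, hWA⟩
  · exfalso
    rcases hadj with h1 | h2
    · exact (hWB hy).2 (hG1 x y h1).2
    · exact (hZA hx).2 (hG2 x y h2).1
  · exfalso
    rcases hadj with h1 | h2
    · exact (hZB hx).2 (hG1 x y h1).1
    · exact (hWA hy).2 (hG2 x y h2).2
  · exact Or.inr ⟨hZB, hWB⟩
end

section
/- Let ε ∈ (0,1), C ≥ 1, f ∈ ℕ, δ ∈ (0,1) with f²δ < 1, and set p(n) = n^{−δ}, m(n) = ⌊Cn⌋. In the bipartite random graph G(m(n), n, p(n)), the probability of the event that there exist pairwise disjoint nonempty sets X_1,...,X_k ⊆ A and Y_1,...,Y_k ⊆ B with k ≥ εn, all of size at most f, such that no pair (i,j) has X_i completely joined to Y_j, is at most exp(ln((C+1)n+1)·(C+1)n − ε²·n^{2−f²δ}), which tends to 0 as n → ∞. -/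
open MeasureTheory ENNReal

noncomputable def bernoulliMeasure (p : ℝ≥0∞) : Measure Bool :=
  p • Measure.dirac true + (1 - p) • Measure.dirac false

/-- The random bipartite graph `G(m,n,p)` with parts `A = Fin m`, `B = Fin n`. -/
noncomputable def bipRandom (m n : ℕ) (p : ℝ≥0∞) : Measure ((Fin m × Fin n) → Bool) :=
  Measure.pi fun _ => bernoulliMeasure p

/-!
Only `t = ⌈εn⌉` of the pairs `(X_i, Y_i)` are needed. Disjoint sets `X_1, …, X_t ⊆ A` are
the fibres of a labelling `A → Option (Fin t)`, so a union bound over the `(t+1)^(m+n)` pairs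
of labellings replaces the far more numerous choices of families. For fixed fibres, the `t²`
events "`X_i` is not completely joined to `Y_j`" concern the pairwise disjoint edge sets
`X_i × Y_j`, hence are independent, each of probability `1 - p^(|X_i||Y_j|) ≤ 1 - n^(-f²δ)`.
So they occur together with probability at most `exp(-n^(-f²δ) t²) ≤ exp(-ε² n^(2-f²δ))`,
and as `2 - f²δ > 1` this beats the `n log n` of the union bound.
-/

open Finset Filter Asymptotics Function

section Independence

variable {ι Ω : Type*} [Fintype ι] [MeasurableSpace Ω] [Countable Ω]
  [MeasurableSingletonClass Ω] {μ : ι → Measure Ω} [∀ i, IsProbabilityMeasure (μ i)]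

theorem measure_pi_inter_of_dependsOn {S T : Finset ι} (hST : Disjoint S T) {E F : Set (ι → Ω)}
    (hE : DependsOn (· ∈ E) S) (hF : DependsOn (· ∈ F) T) :
    Measure.pi μ (E ∩ F) = Measure.pi μ E * Measure.pi μ F := by
  obtain ⟨g, hg⟩ := dependsOn_iff_exists_comp.1 hE
  obtain ⟨h, hh⟩ := dependsOn_iff_exists_comp.1 hF
  have hE' : E = (fun ω (i : S) ↦ ω i) ⁻¹' {x | g x} := by
    ext ω; exact iff_of_eq (congrFun hg ω)
  have hF' : F = (fun ω (i : T) ↦ ω i) ⁻¹' {x | h x} := by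
    ext ω; exact iff_of_eq (congrFun hh ω)
  have hind := (ProbabilityTheory.iIndepFun_pi (μ := μ) (X := fun _ ↦ id)
    fun _ ↦ aemeasurable_id).indepFun_finset S T hST fun i ↦ measurable_pi_apply i
  rw [hE', hF']
  exact hind.measure_inter_preimage_eq_mul _ _ (Set.to_countable _).measurableSet
    (Set.to_countable _).measurableSet

end Independence

section Bernoulli

variable {p : ℝ≥0∞}

theorem isProbabilityMeasure_bernoulliMeasure (hp : p ≤ 1) :
    IsProbabilityMeasure (bernoulliMeasure p) :=
  ⟨by simp [bernoulliMeasure, add_tsub_cancel_of_le hp]⟩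

variable {ι κ : Type*} [Fintype ι]

theorem bernoulliMeasure_pi_exists_false (hp : p ≤ 1) (S : Finset ι) :
    Measure.pi (fun _ : ι ↦ bernoulliMeasure p) {ω | ∃ c ∈ S, ω c = false}
      = 1 - p ^ #S := by
  have := isProbabilityMeasure_bernoulliMeasure hp
  have hcompl : {ω : ι → Bool | ∃ c ∈ S, ω c = false}
      = ((S : Set ι).pi fun _ ↦ {true})ᶜ := by
    ext ω; simp [Set.mem_pi]
  rw [hcompl, prob_compl_eq_one_sub (Set.to_countable _).measurableSet, Measure.pi_pi_finset]
  simp [bernoulliMeasure]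

theorem bernoulliMeasure_pi_forall_exists_false (hp : p ≤ 1) (Q : Finset κ)
    (S : κ → Finset ι) (hS : (Q : Set κ).PairwiseDisjoint S) :
    Measure.pi (fun _ : ι ↦ bernoulliMeasure p) {ω | ∀ q ∈ Q, ∃ c ∈ S q, ω c = false}
      = ∏ q ∈ Q, (1 - p ^ #(S q)) := by
  have := isProbabilityMeasure_bernoulliMeasure hp
  classical
  induction Q using Finset.induction_on with
  | empty => simp
  | insert q Q hq ih =>
    have hdisj : Disjoint (S q) (Q.biUnion S) := by
      refine (disjoint_biUnion_right _ _ _).2 fun q' hq' ↦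
        hS (by simp) (by simp [hq']) (ne_of_mem_of_not_mem hq' hq).symm
    have hsplit : {ω : ι → Bool | ∀ q' ∈ insert q Q, ∃ c ∈ S q', ω c = false}
        = {ω | ∃ c ∈ S q, ω c = false} ∩
          {ω | ∀ q' ∈ Q, ∃ c ∈ S q', ω c = false} := by
      ext ω; simp
    rw [hsplit, measure_pi_inter_of_dependsOn hdisj, bernoulliMeasure_pi_exists_false hp,
      ih (hS.subset (by simp)), prod_insert hq]
    · intro x y hxy
      simp only [Set.mem_ofPred_eq]
      exact propext <| exists_congr fun c ↦ and_congr_right fun hc ↦ by rw [hxy c hc]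
    · intro x y hxy
      simp only [Set.mem_ofPred_eq]
      exact propext <| forall₂_congr fun q' hq' ↦ exists_congr fun c ↦
        and_congr_right fun hc ↦ by rw [hxy c (mem_biUnion.2 ⟨q', hq', hc⟩)]

end Bernoulli

section Graph

variable {α β κ : Type*} {p : ℝ≥0∞}

theorem bernoulliMeasure_pi_forall_exists_false_product_le [Fintype α] [Fintype β] [Fintype κ]
    (hp : p ≤ 1) {f : ℕ} (X : κ → Finset α) (Y : κ → Finset β)
    (hX : Pairwise (Disjoint on X)) (hY : Pairwise (Disjoint on Y)) (hXf : ∀ i, #(X i) ≤ f)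
    (hYf : ∀ j, #(Y j) ≤ f) :
    Measure.pi (fun _ : α × β ↦ bernoulliMeasure p)
        {ω | ∀ i j, ∃ x ∈ X i, ∃ y ∈ Y j, ω (x, y) = false}
      ≤ (1 - p ^ (f * f)) ^ (Fintype.card κ * Fintype.card κ) := by
  have hblocks : ((univ : Finset (κ × κ)) : Set (κ × κ)).PairwiseDisjoint
      fun q ↦ X q.1 ×ˢ Y q.2 := by
    rintro ⟨i, j⟩ - ⟨i', j'⟩ - hne
    simp only [Function.onFun, disjoint_product]
    by_cases hi : i = i'
    · exact .inr (hY fun hj ↦ hne (by rw [hi, hj]))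
    · exact .inl (hX hi)
  have hevent : {ω : α × β → Bool | ∀ i j, ∃ x ∈ X i, ∃ y ∈ Y j, ω (x, y) = false}
      = {ω | ∀ q ∈ (univ : Finset (κ × κ)), ∃ c ∈ X q.1 ×ˢ Y q.2, ω c = false} := by
    ext ω
    simp [and_assoc]
  calc _ = ∏ q : κ × κ, (1 - p ^ #(X q.1 ×ˢ Y q.2)) := by
        rw [hevent, bernoulliMeasure_pi_forall_exists_false hp _ _ hblocks]
    _ ≤ ∏ _q : κ × κ, (1 - p ^ (f * f)) := by
        refine prod_le_prod' fun q _ ↦ tsub_le_tsub_left (pow_le_pow_of_le_one zero_le hp ?_) 1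
        exact card_product (X q.1) (Y q.2) ▸ Nat.mul_le_mul (hXf q.1) (hYf q.2)
    _ = _ := by simp [Fintype.card_prod]

theorem pairwise_disjoint_filter_eq_some [Fintype α] [DecidableEq κ] (a : α → Option κ) :
    Pairwise (Disjoint on fun i ↦ ({x | a x = some i} : Finset α)) :=
  fun _ _ hij ↦ disjoint_filter.2 fun _ _ hi hj ↦
    hij (Option.some_injective _ (hi.symm.trans hj))

theorem exists_filter_eq_some_eq [Fintype α] [DecidableEq κ] (X : κ → Finset α)
    (hX : Pairwise (Disjoint on X)) :
    ∃ a : α → Option κ, ∀ i, ({x | a x = some i} : Finset α) = X i := by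
  classical
  refine ⟨fun x ↦ if h : ∃ i, x ∈ X i then some h.choose else none, fun i ↦ ?_⟩
  ext x
  simp only [mem_filter, mem_univ, true_and]
  split_ifs with h
  · refine ⟨fun hi ↦ Option.some_injective _ hi ▸ h.choose_spec, fun hx ↦ ?_⟩
    by_contra hne
    exact disjoint_left.1 (hX fun hci ↦ hne (by rw [hci])) h.choose_spec hx
  · exact ⟨nofun, fun hx ↦ h ⟨i, hx⟩⟩

def HasUnjoinedFamilies (f k : ℕ) (ω : α × β → Bool) : Prop :=
  ∃ (X : Fin k → Finset α) (Y : Fin k → Finset β), Pairwise (Disjoint on X) ∧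
    Pairwise (Disjoint on Y) ∧ (∀ i, #(X i) ≤ f) ∧ (∀ j, #(Y j) ≤ f) ∧
    ∀ i j, ∃ x ∈ X i, ∃ y ∈ Y j, ω (x, y) = false

theorem HasUnjoinedFamilies.mono {f k t : ℕ} {ω : α × β → Bool}
    (h : HasUnjoinedFamilies f k ω) (htk : t ≤ k) : HasUnjoinedFamilies f t ω := by
  obtain ⟨X, Y, hX, hY, hXf, hYf, hω⟩ := h
  have hcast := Fin.castLE_injective htk
  exact ⟨X ∘ Fin.castLE htk, Y ∘ Fin.castLE htk, hX.comp_of_injective hcast,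
    hY.comp_of_injective hcast, fun i ↦ hXf _, fun j ↦ hYf _, fun i j ↦ hω _ _⟩

theorem bernoulliMeasure_pi_hasUnjoinedFamilies_le [Fintype α] [Fintype β] (hp : p ≤ 1)
    (f t : ℕ) :
    Measure.pi (fun _ : α × β ↦ bernoulliMeasure p) {ω | HasUnjoinedFamilies f t ω}
      ≤ (t + 1) ^ (Fintype.card α + Fintype.card β) * (1 - p ^ (f * f)) ^ (t * t) := by
  classical
  let L : Finset ((α → Option (Fin t)) × (β → Option (Fin t))) :=
    {ab | (∀ i, #{x | ab.1 x = some i} ≤ f) ∧ ∀ j, #{y | ab.2 y = some j} ≤ f}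
  let E (ab : (α → Option (Fin t)) × (β → Option (Fin t))) : Set (α × β → Bool) :=
    {ω | ∀ i j, ∃ x ∈ ({x | ab.1 x = some i} : Finset α),
      ∃ y ∈ ({y | ab.2 y = some j} : Finset β), ω (x, y) = false}
  have hcover : {ω | HasUnjoinedFamilies f t ω} ⊆ ⋃ ab ∈ L, E ab := by
    rintro ω ⟨X, Y, hX, hY, hXf, hYf, hω⟩
    obtain ⟨a, ha⟩ := exists_filter_eq_some_eq X hX
    obtain ⟨b, hb⟩ := exists_filter_eq_some_eq Y hY
    refine Set.mem_biUnion (x := (a, b)) (by simp [L, ha, hb, hXf, hYf]) ?_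
    simp only [E, ha, hb]
    exact hω
  have hE : ∀ ab ∈ L, Measure.pi (fun _ ↦ bernoulliMeasure p) (E ab)
      ≤ (1 - p ^ (f * f)) ^ (t * t) := fun ab hab ↦
    (bernoulliMeasure_pi_forall_exists_false_product_le hp _ _
      (pairwise_disjoint_filter_eq_some ab.1) (pairwise_disjoint_filter_eq_some ab.2)
      (mem_filter.1 hab).2.1 (mem_filter.1 hab).2.2).trans_eq (by simp)
  calc _ ≤ Measure.pi (fun _ ↦ bernoulliMeasure p) (⋃ ab ∈ L, E ab) := measure_mono hcover
    _ ≤ ∑ ab ∈ L, Measure.pi (fun _ ↦ bernoulliMeasure p) (E ab) :=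
        measure_biUnion_finset_le _ _
    _ ≤ #L * (1 - p ^ (f * f)) ^ (t * t) := by
        simpa using sum_le_card_nsmul L _ _ hE
    _ ≤ _ := by
        gcongr
        calc (#L : ℝ≥0∞)
            ≤ Fintype.card ((α → Option (Fin t)) × (β → Option (Fin t))) := by
              exact_mod_cast card_le_univ L
          _ = _ := by simp [pow_add]

end Graph

theorem natCast_add_one_pow_le_exp {m n t : ℕ} {C : ℝ} (hC : 0 ≤ C) (htn : t ≤ n)
    (hm : (m : ℝ) ≤ C * n) :
    (t + 1 : ℝ) ^ (m + n) ≤ Real.exp (Real.log ((C + 1) * n + 1) * ((C + 1) * n)) := by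
  have hbase : (t + 1 : ℝ) ≤ (C + 1) * n + 1 := by
    have : (t : ℝ) ≤ n := by exact_mod_cast htn
    nlinarith [(n.cast_nonneg : (0 : ℝ) ≤ n)]
  calc (t + 1 : ℝ) ^ (m + n) ≤ ((C + 1) * n + 1) ^ (m + n) := by gcongr
    _ = ((C + 1) * n + 1) ^ ((m + n : ℕ) : ℝ) := (Real.rpow_natCast _ _).symm
    _ ≤ ((C + 1) * n + 1) ^ ((C + 1) * n) := by
        refine Real.rpow_le_rpow_of_exponent_le (by linarith [t.cast_nonneg (α := ℝ)]) ?_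
        push_cast
        linarith
    _ = _ := Real.rpow_def_of_pos (by positivity) _

theorem one_sub_rpow_neg_pow_le_exp {x a c : ℝ} {t : ℕ} (hx : 1 ≤ x) (ha : 0 ≤ a)
    (hc : 0 ≤ c) (ht : c * x ≤ t) :
    (1 - x ^ (-a)) ^ (t * t) ≤ Real.exp (-(c ^ 2 * x ^ (2 - a))) := by
  have hx0 : 0 < x := by linarith
  have hs : x ^ (-a) ≤ 1 := Real.rpow_le_one_of_one_le_of_nonpos hx (by linarith)
  have hsplit : c ^ 2 * x ^ (2 - a) = x ^ (-a) * (c * x) ^ 2 := by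
    rw [sub_eq_neg_add, Real.rpow_add hx0, Real.rpow_two]; ring
  calc (1 - x ^ (-a)) ^ (t * t) ≤ Real.exp (-x ^ (-a)) ^ (t * t) :=
        pow_le_pow_left₀ (sub_nonneg.2 hs) (Real.one_sub_le_exp_neg _) _
    _ = Real.exp (-(x ^ (-a) * (t : ℝ) ^ 2)) := by
        rw [← Real.exp_nat_mul]; push_cast; ring_nf
    _ ≤ Real.exp (-(c ^ 2 * x ^ (2 - a))) := by
        rw [hsplit]
        gcongr

theorem tendsto_log_mul_sub_rpow_atBot {a c α : ℝ} (ha : 0 < a) (hc : 0 < c) (hα : 1 < α) :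
    Tendsto (fun x : ℝ ↦ Real.log (a * x + 1) * (a * x) - c * x ^ α) atTop atBot := by
  have hγ : 0 < α - 1 := by linarith
  have hlin : Tendsto (fun x : ℝ ↦ a * x + 1) atTop atTop :=
    tendsto_atTop_add_const_right _ 1 (tendsto_id.const_mul_atTop ha)
  have hlinO : (fun x : ℝ ↦ a * x + 1) =O[atTop] fun x ↦ x :=
    (isBigO_const_mul_self a _ _).add (isLittleO_const_id_atTop 1).isBigO
  have hlog : (fun x : ℝ ↦ Real.log (a * x + 1)) =o[atTop] fun x ↦ x ^ (α - 1) :=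
    ((isLittleO_log_rpow_atTop hγ).comp_tendsto hlin).trans_isBigO
      (hlinO.rpow hγ.le (eventually_ge_atTop 0))
  have hpow : (fun x : ℝ ↦ x ^ (α - 1) * x) =ᶠ[atTop] fun x ↦ x ^ α := by
    filter_upwards [eventually_gt_atTop 0] with x hx
    rw [← Real.rpow_add_one hx.ne', sub_add_cancel]
  have hmain : (fun x : ℝ ↦ Real.log (a * x + 1) * (a * x)) =o[atTop] fun x ↦ -(c * x ^ α) :=
    isLittleO_neg_right.2 <| (isLittleO_const_mul_right_iff hc.ne').2 <|
      (hlog.mul_isBigO (isBigO_const_mul_self a _ _)).trans_eventuallyEq hpow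
  have hequiv := (IsEquivalent.refl (u := fun x : ℝ ↦ -(c * x ^ α))).add_isLittleO hmain
  refine hequiv.symm.tendsto_atBot ?_ |>.congr fun x ↦ ?_
  · exact tendsto_neg_atTop_atBot.comp ((tendsto_rpow_atTop (by linarith)).const_mul_atTop hc)
  · simp only [Pi.add_apply]
    ring

theorem add_one_pow_mul_one_sub_pow_le_ofReal_exp {m n t f : ℕ} {C ε δ : ℝ}
    (hn : 1 ≤ (n : ℝ)) (hC : 0 ≤ C) (hε : 0 ≤ ε) (hδ : 0 ≤ δ)
    (hm : (m : ℝ) ≤ C * n) (htn : t ≤ n) (ht : ε * n ≤ t) :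
    (t + 1) ^ (m + n) * (1 - ENNReal.ofReal ((n : ℝ) ^ (-δ)) ^ (f * f)) ^ (t * t)
      ≤ ENNReal.ofReal (Real.exp (Real.log ((C + 1) * n + 1) * ((C + 1) * n)
          - ε ^ 2 * (n : ℝ) ^ (2 - (f : ℝ) ^ 2 * δ))) := by
  have hfδ : 0 ≤ (f : ℝ) ^ 2 * δ := by positivity
  have hpow : ENNReal.ofReal ((n : ℝ) ^ (-δ)) ^ (f * f)
      = ENNReal.ofReal ((n : ℝ) ^ (-((f : ℝ) ^ 2 * δ))) := by
    rw [← ENNReal.ofReal_pow (by positivity), ← Real.rpow_natCast,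
      ← Real.rpow_mul (by positivity)]
    congr 2
    push_cast
    ring
  calc _ = ENNReal.ofReal ((t + 1) ^ (m + n)) *
        ENNReal.ofReal ((1 - (n : ℝ) ^ (-((f : ℝ) ^ 2 * δ))) ^ (t * t)) := by
        rw [hpow, ENNReal.ofReal_pow (by positivity), ENNReal.ofReal_pow
          (sub_nonneg.2 (Real.rpow_le_one_of_one_le_of_nonpos hn (by linarith))),
          ENNReal.ofReal_sub _ (by positivity), ENNReal.ofReal_add (by positivity) zero_le_one,
          ENNReal.ofReal_natCast, ENNReal.ofReal_one]
    _ ≤ ENNReal.ofReal (Real.exp (Real.log ((C + 1) * n + 1) * ((C + 1) * n))) *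
          ENNReal.ofReal (Real.exp (-(ε ^ 2 * (n : ℝ) ^ (2 - (f : ℝ) ^ 2 * δ)))) := by
        gcongr
        · exact natCast_add_one_pow_le_exp hC htn hm
        · exact one_sub_rpow_neg_pow_le_exp hn hfδ hε ht
    _ = _ := by
        rw [← ENNReal.ofReal_mul (Real.exp_pos _).le, ← Real.exp_add, ← sub_eq_add_neg]

/-- With `p(n) = n^{-δ}` and `m(n) = ⌊Cn⌋`, the probability that in
`G(m(n), n, p(n))` there exist pairwise disjoint nonempty sets
`X_1,…,X_k ⊆ A`, `Y_1,…,Y_k ⊆ B` with `k ≥ εn`, all of size at most `f`, such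
that no pair `(i,j)` has `X_i` completely joined to `Y_j`, is at most
`exp(ln((C+1)n+1)·(C+1)n − ε²·n^{2−f²δ})`, which tends to `0` as `n → ∞`. -/
theorem stmt5 (ε C : ℝ) (hε : 0 < ε ∧ ε < 1) (hC : 1 ≤ C) (f : ℕ) (δ : ℝ)
    (hδ : 0 < δ ∧ δ < 1) (hfδ : (f : ℝ) ^ 2 * δ < 1) :
    (∀ n : ℕ, 0 < n →
      bipRandom (⌊C * n⌋₊) n (ENNReal.ofReal ((n : ℝ) ^ (-δ)))
          {ω | ∃ k : ℕ, ε * n ≤ k ∧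
            ∃ (X : Fin k → Finset (Fin ⌊C * n⌋₊)) (Y : Fin k → Finset (Fin n)),
              (∀ i, (X i).Nonempty) ∧ (∀ j, (Y j).Nonempty) ∧
              (∀ i j, i ≠ j → Disjoint (X i) (X j)) ∧
              (∀ i j, i ≠ j → Disjoint (Y i) (Y j)) ∧
              (∀ i, (X i).card ≤ f) ∧ (∀ j, (Y j).card ≤ f) ∧
              ∀ i j, ∃ x ∈ X i, ∃ y ∈ Y j, ω (x, y) = false}
        ≤ ENNReal.ofReal (Real.exp
            (Real.log ((C + 1) * n + 1) * ((C + 1) * n)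
              - ε ^ 2 * (n : ℝ) ^ (2 - (f : ℝ) ^ 2 * δ)))) ∧
    Filter.Tendsto
      (fun n : ℕ => Real.exp
        (Real.log ((C + 1) * n + 1) * ((C + 1) * n)
          - ε ^ 2 * (n : ℝ) ^ (2 - (f : ℝ) ^ 2 * δ)))
      Filter.atTop (nhds 0) := by
  refine ⟨fun n hn ↦ ?_, Real.tendsto_exp_atBot.comp <|
    (tendsto_log_mul_sub_rpow_atBot (by linarith) (pow_pos hε.1 2) (by linarith)).comp
      tendsto_natCast_atTop_atTop⟩
  have hn1 : (1 : ℝ) ≤ n := by exact_mod_cast hn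
  have hp : ENNReal.ofReal ((n : ℝ) ^ (-δ)) ≤ 1 :=
    ENNReal.ofReal_le_one.2 (Real.rpow_le_one_of_one_le_of_nonpos hn1 (by linarith))
  set t := ⌈ε * n⌉₊
  calc _ ≤ bipRandom ⌊C * n⌋₊ n (ENNReal.ofReal ((n : ℝ) ^ (-δ)))
        {ω | HasUnjoinedFamilies f t ω} := measure_mono <| by
          rintro ω ⟨k, hk, X, Y, -, -, hX, hY, hXf, hYf, hω⟩
          exact HasUnjoinedFamilies.mono ⟨X, Y, hX, hY, hXf, hYf, hω⟩ (Nat.ceil_le.2 hk)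
    _ ≤ (t + 1) ^ (⌊C * n⌋₊ + n) *
          (1 - ENNReal.ofReal ((n : ℝ) ^ (-δ)) ^ (f * f)) ^ (t * t) :=
        (bernoulliMeasure_pi_hasUnjoinedFamilies_le hp f t).trans_eq (by simp)
    _ ≤ _ := add_one_pow_mul_one_sub_pow_le_ofReal_exp hn1 (by linarith) hε.1.le hδ.1.le
        (Nat.floor_le (by positivity)) (Nat.ceil_le.2 (by nlinarith)) (Nat.le_ceil _)
end

section
/- Let H be a graph with vertex set A ∪ B, A and B disjoint cliques, |A| = m, |B| = n, and every vertex having at most d non-neighbors. Form the graph 𝐆 as the union over all colorings c : B → [m+n−1] of disjoint copies H(c) of H sharing the common set B (copies A(c) pairwise disjoint). Define lists L(b) = [m+n−1] for b ∈ B, and L(a) = [m+n−1] \ {c(b) : b ∈ B, ab ∉ E(H(c))} for a ∈ A(c). Then every list has size at least m+n−1−d, and 𝐆 admits no L-coloring; consequently χ_ℓ(𝐆) ≥ m + n − d. -/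
def Choosable {V : Type*} (G : SimpleGraph V) (k : ℕ) : Prop :=
  ∀ L : V → Finset ℕ, (∀ v, k ≤ (L v).card) →
    ∃ c : V → ℕ, (∀ v, c v ∈ L v) ∧ ∀ u v, G.Adj u v → c u ≠ c v

/-- The graph `𝐆` obtained by gluing, over all colorings `c : B → Fin K`, disjoint
copies `H(c)` (with `A`-side `{c} × A`) of a graph `H` on `A ⊕ B` along the common
set `B`. -/
def GlueGraph {A B : Type*} (H : SimpleGraph (A ⊕ B)) (K : ℕ) :
    SimpleGraph ((B → Fin K) × A ⊕ B) where
  Adj u v :=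
    (match u, v with
      | .inl p, .inl q => p.1 = q.1
      | _, _ => True) ∧
    H.Adj (Sum.elim (fun p => Sum.inl p.2) Sum.inr u)
          (Sum.elim (fun p => Sum.inl p.2) Sum.inr v)
  symm := by
    constructor
    rintro (⟨c, a⟩ | b) (⟨c', a'⟩ | b') ⟨h1, h2⟩ <;>
      exact ⟨by simp_all, h2.symm⟩
  loopless := by
    constructor
    rintro (⟨c, a⟩ | b) ⟨h1, h2⟩ <;> exact H.loopless.irrefl _ h2

/-!
In the copy `H(c)` selected by the colours `c` that a colouring gives to `B`, any two distinct
vertices receive distinct colours: inside `A` and inside `B` because these are cliques, and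
for `a ∈ A`, `b ∈ B` either because `ab` is an edge or, if it is not, because `c b` was removed
from the list of `a`. So the colouring is injective on the `m + n` vertices of `H(c)`, which is
impossible with `m + n - 1` colours. Each list of `A(c)` loses at most the `d` colours of the
non-neighbours of `a` in `B`.
-/

open Finset

theorem Finset.card_sub_card_filter_le_card_filter_forall_ne {α β : Type*} [Fintype α]
    [DecidableEq α] [Fintype β] (p : β → Prop) [DecidablePred p] (f : β → α) :
    Fintype.card α - #{b | p b} ≤ #{x | ∀ b, p b → f b ≠ x} := by
  have hcompl : #{x | ¬ ∀ b, p b → f b ≠ x} ≤ #{b | p b} := by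
    refine (card_le_card (t := image f {b | p b}) fun x hx => ?_).trans card_image_le
    obtain ⟨b, hb, rfl⟩ : ∃ b, p b ∧ f b = x := by simpa using hx
    exact mem_image_of_mem f (by simpa using hb)
  have := card_filter_add_card_filter_not (s := univ) fun x => ∀ b, p b → f b ≠ x
  rw [card_univ] at this
  omega

theorem Finset.card_filter_comp_inr_le {α β : Type*} [Fintype α] [Fintype β]
    (p : α ⊕ β → Prop) [DecidablePred p] :
    #{b | p (Sum.inr b)} ≤ #{u | p u} := by
  rw [← card_map Function.Embedding.inr]
  exact card_le_card fun u hu => by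
    obtain ⟨b, hb, rfl⟩ := mem_map.mp hu
    simpa using hb

namespace GlueGraph

variable {A B : Type*} (H : SimpleGraph (A ⊕ B)) (K : ℕ)

/-- The copy `H(c)` of `H` inside `GlueGraph H K`. -/
def copy (c : B → Fin K) : H ↪g GlueGraph H K where
  toFun := Sum.map (Prod.mk c) id
  inj' := Sum.map_injective.mpr ⟨Prod.mk_right_injective c, fun _ _ => id⟩
  map_rel_iff' := by
    rintro (a | b) (a' | b') <;> simp [GlueGraph]

variable {H K}

theorem injective_coloring_comp_copy
    (hcliqueA : ∀ a a' : A, a ≠ a' → H.Adj (Sum.inl a) (Sum.inl a'))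
    (hcliqueB : ∀ b b' : B, b ≠ b' → H.Adj (Sum.inr b) (Sum.inr b'))
    {col : (B → Fin K) × A ⊕ B → Fin K}
    (hproper : ∀ u v, (GlueGraph H K).Adj u v → col u ≠ col v)
    (hlist : ∀ a, ∀ b : B, ¬ H.Adj (Sum.inl a) (Sum.inr b) →
      col (Sum.inr b) ≠ col (Sum.inl (col ∘ Sum.inr, a))) :
    Function.Injective (col ∘ copy H K (col ∘ Sum.inr)) := by
  intro u v huv
  by_contra hne
  have hnadj : ¬ H.Adj u v := fun h => hproper _ _ ((copy H K _).map_rel_iff.mpr h) huv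
  rcases u with a | b <;> rcases v with a' | b'
  · exact hnadj (hcliqueA a a' (by simpa using hne))
  · exact hlist a b' hnadj huv.symm
  · exact hlist a' b (fun h => hnadj h.symm) huv
  · exact hnadj (hcliqueB b b' (by simpa using hne))

end GlueGraph

theorem Choosable.exists_fin_coloring {V : Type*} {G : SimpleGraph V} {k K : ℕ}
    (hG : Choosable G k) (L : V → Finset (Fin K)) (hL : ∀ v, k ≤ (L v).card) :
    ∃ col : V → Fin K, (∀ v, col v ∈ L v) ∧ ∀ u v, G.Adj u v → col u ≠ col v := by
  obtain ⟨col, hmem, hproper⟩ := hG (fun v => (L v).map Fin.valEmbedding) (by simpa using hL)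
  choose col' hcol' hval using fun v => mem_map.mp (hmem v)
  refine ⟨col', hcol', fun u v huv h => hproper u v huv ?_⟩
  rw [← hval u, ← hval v, h]

theorem stmt13_general {A B : Type*} [Fintype A] [Fintype B] [DecidableEq A] [DecidableEq B]
    (m n d : ℕ) (hm : 0 < m)
    (hA : Fintype.card A = m) (hB : Fintype.card B = n)
    (H : SimpleGraph (A ⊕ B)) [DecidableRel H.Adj]
    (hcliqueA : ∀ a a' : A, a ≠ a' → H.Adj (Sum.inl a) (Sum.inl a'))
    (hcliqueB : ∀ b b' : B, b ≠ b' → H.Adj (Sum.inr b) (Sum.inr b'))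
    (hd : ∀ v : A ⊕ B,
      (Finset.univ.filter fun u => u ≠ v ∧ ¬ H.Adj v u).card ≤ d)
    (L : (B → Fin (m + n - 1)) × A ⊕ B → Finset (Fin (m + n - 1)))
    (hLB : ∀ b : B, L (Sum.inr b) = Finset.univ)
    (hLA : ∀ (c : B → Fin (m + n - 1)) (a : A),
      L (Sum.inl (c, a)) =
        Finset.univ.filter fun col =>
          ∀ b : B, ¬ H.Adj (Sum.inl a) (Sum.inr b) → c b ≠ col) :
    (∀ v, m + n - 1 - d ≤ (L v).card) ∧
    (¬ ∃ col : (B → Fin (m + n - 1)) × A ⊕ B → Fin (m + n - 1),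
        (∀ v, col v ∈ L v) ∧
        ∀ u v, (GlueGraph H (m + n - 1)).Adj u v → col u ≠ col v) ∧
    ¬ Choosable (GlueGraph H (m + n - 1)) (m + n - 1 - d) := by
  have hcard : ∀ v, m + n - 1 - d ≤ (L v).card := by
    rintro (⟨c, a⟩ | b)
    · have hnonadj := (card_filter_comp_inr_le
        fun u => u ≠ Sum.inl a ∧ ¬ H.Adj (Sum.inl a) u).trans (hd (Sum.inl a))
      have hlist := card_sub_card_filter_le_card_filter_forall_ne
        (fun b => ¬ H.Adj (Sum.inl a) (Sum.inr b)) c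
      simp only [ne_eq, reduceCtorEq, not_false_eq_true, true_and] at hnonadj
      rw [Fintype.card_fin] at hlist
      rw [hLA]
      omega
    · simp [hLB]
  have hnot : ¬ ∃ col : (B → Fin (m + n - 1)) × A ⊕ B → Fin (m + n - 1),
      (∀ v, col v ∈ L v) ∧ ∀ u v, (GlueGraph H (m + n - 1)).Adj u v → col u ≠ col v := by
    rintro ⟨col, hmem, hproper⟩
    have hinj := GlueGraph.injective_coloring_comp_copy hcliqueA hcliqueB hproper
      fun a => by simpa [hLA] using hmem (Sum.inl (col ∘ Sum.inr, a))
    have := Fintype.card_le_of_injective _ hinj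
    rw [Fintype.card_sum, hA, hB, Fintype.card_fin] at this
    omega
  exact ⟨hcard, hnot, fun hch => hnot (hch.exists_fin_coloring L hcard)⟩

/-- The list assignment of the construction and its properties: every list has
size at least `m + n - 1 - d`, `𝐆` admits no coloring from these lists, and
consequently `χ_ℓ(𝐆) ≥ m + n - d`, i.e. `𝐆` is not `(m+n-1-d)`-choosable. -/
theorem stmt13 {A B : Type*} [Fintype A] [Fintype B] [DecidableEq A] [DecidableEq B]
    (m n d : ℕ) (hm : 0 < m) (hn : 0 < n)
    (hA : Fintype.card A = m) (hB : Fintype.card B = n)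
    (H : SimpleGraph (A ⊕ B)) [DecidableRel H.Adj]
    (hcliqueA : ∀ a a' : A, a ≠ a' → H.Adj (Sum.inl a) (Sum.inl a'))
    (hcliqueB : ∀ b b' : B, b ≠ b' → H.Adj (Sum.inr b) (Sum.inr b'))
    (hd : ∀ v : A ⊕ B,
      (Finset.univ.filter fun u => u ≠ v ∧ ¬ H.Adj v u).card ≤ d)
    (L : (B → Fin (m + n - 1)) × A ⊕ B → Finset (Fin (m + n - 1)))
    (hLB : ∀ b : B, L (Sum.inr b) = Finset.univ)
    (hLA : ∀ (c : B → Fin (m + n - 1)) (a : A),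
      L (Sum.inl (c, a)) =
        Finset.univ.filter fun col =>
          ∀ b : B, ¬ H.Adj (Sum.inl a) (Sum.inr b) → c b ≠ col) :
    (∀ v, m + n - 1 - d ≤ (L v).card) ∧
    (¬ ∃ col : (B → Fin (m + n - 1)) × A ⊕ B → Fin (m + n - 1),
        (∀ v, col v ∈ L v) ∧
        ∀ u v, (GlueGraph H (m + n - 1)).Adj u v → col u ≠ col v) ∧
    ¬ Choosable (GlueGraph H (m + n - 1)) (m + n - 1 - d) :=
  stmt13_general m n d hm hA hB H hcliqueA hcliqueB hd L hLB hLA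
end

section
/- Suppose that for every pair of integers n ≤ m with n sufficiently large and m ≤ C'n there exists a graph H on disjoint cliques A (size m) and B (size n) in which every vertex has at most (ε/2)·n non-neighbors and which has no K_{s,t}-minor whenever n ≤ s and m ≤ (1−ε)(s+t). Then for every pair s ≤ t ≤ Cs with s sufficiently large there exists a graph with no K_{s,t}-minor and list chromatic number greater than (1−ε)(2s+t). -/
open Finset SimpleGraph

structure IsKstModel {V : Type*} (G : SimpleGraph V) {s t : ℕ}
    (Z : Fin s → Set V) (Y : Fin t → Set V) : Prop where
  left_nonempty : ∀ i, (Z i).Nonempty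
  right_nonempty : ∀ j, (Y j).Nonempty
  left_disjoint : ∀ i i', i ≠ i' → Disjoint (Z i) (Z i')
  right_disjoint : ∀ j j', j ≠ j' → Disjoint (Y j) (Y j')
  left_right_disjoint : ∀ i j, Disjoint (Z i) (Y j)
  left_connected : ∀ i, (G.induce (Z i)).Connected
  right_connected : ∀ j, (G.induce (Y j)).Connected
  exists_adj : ∀ i j, ∃ x ∈ Z i, ∃ y ∈ Y j, G.Adj x y

theorem hasKstMinor_iff {V : Type*} {G : SimpleGraph V} {s t : ℕ} :
    HasKstMinor G s t ↔ ∃ (Z : Fin s → Set V) (Y : Fin t → Set V), IsKstModel G Z Y :=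
  ⟨fun ⟨Z, Y, h₁, h₂, h₃, h₄, h₅, h₆, h₇, h₈⟩ => ⟨Z, Y, ⟨h₁, h₂, h₃, h₄, h₅, h₆, h₇, h₈⟩⟩,
    fun ⟨Z, Y, h⟩ => ⟨Z, Y, h.1, h.2, h.3, h.4, h.5, h.6, h.7, h.8⟩⟩

theorem exists_forall_notMem_of_card_lt {W β : Type*} [Fintype β] (f : β → W) {s : ℕ}
    {Z : Fin s → Set W} (hZ : ∀ i i', i ≠ i' → Disjoint (Z i) (Z i'))
    (hs : Fintype.card β < s) : ∃ i, ∀ b, f b ∉ Z i := by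
  by_contra! hmeet
  choose g hg using hmeet
  have hg_inj : Function.Injective g := fun i i' h => by
    by_contra hne
    exact Set.disjoint_left.mp (hZ i i' hne) (hg i) (h ▸ hg i')
  simpa using (Fintype.card_le_of_injective g hg_inj).trans_lt hs

namespace SimpleGraph

variable {V V' : Type*} {G : SimpleGraph V} {G' : SimpleGraph V'}

theorem Reachable.map_of_forall_adj (f : V → V')
    (hf : ∀ ⦃x y⦄, G.Adj x y → G'.Reachable (f x) (f y)) {x y : V} (h : G.Reachable x y) :
    G'.Reachable (f x) (f y) := by
  obtain ⟨p⟩ := h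
  induction p with
  | nil => rfl
  | cons hadj _ ih => exact (hf hadj).trans ih

theorem IsClique.reachable_induce {S T : Set V} (hS : G.IsClique S) {a b : T} (ha : a.1 ∈ S)
    (hb : b.1 ∈ S) : (G.induce T).Reachable a b := by
  by_cases hab : a = b
  · rw [hab]
  · exact Adj.reachable (hS ha hb (Subtype.coe_injective.ne hab))

end SimpleGraph

section CliqueAttachment

variable {V W : Type*} {H : SimpleGraph V} {G : SimpleGraph W}

-- The image of `φ` is one side of a clique-sum along `S`.
def AttachesAlong (φ : H ↪g G) (S : Set V) : Prop :=
  ∀ ⦃x : W⦄ ⦃v : V⦄, G.Adj x (φ v) → x ∉ Set.range φ → v ∈ S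

variable {φ : H ↪g G} {S : Set V}

theorem AttachesAlong.exists_mem_of_notMem_range (hφ : AttachesAlong φ S) {X : Set W}
    (hX : (G.induce X).Preconnected) {x : W} (hx : x ∈ X) (hxφ : x ∉ Set.range φ) {v : V}
    (hv : φ v ∈ X) : ∃ u ∈ S, φ u ∈ X := by
  obtain ⟨p⟩ := hX ⟨x, hx⟩ ⟨φ v, hv⟩
  obtain ⟨d, -, hd_out, hd_in⟩ :=
    p.exists_boundary_dart {y | y.1 ∉ Set.range φ} hxφ (by simp)
  obtain ⟨u, hu⟩ := not_not.mp hd_in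
  exact ⟨u, hφ (hu ▸ d.adj) hd_out, hu ▸ d.snd.2⟩

theorem AttachesAlong.connected_induce_preimage (hS : H.IsClique S) (hφ : AttachesAlong φ S)
    {X : Set W} (hX : (G.induce X).Connected) (hXφ : (X ∩ Set.range φ).Nonempty) :
    (H.induce (φ ⁻¹' X)).Connected := by
  classical
  obtain ⟨-, hwX, w, rfl⟩ := hXφ
  -- Contract everything outside the image of `φ` onto one vertex `u₀` of the clique `S`.
  obtain ⟨u₀, hu₀⟩ : ∃ u₀ : φ ⁻¹' X, (∃ x ∈ X, x ∉ Set.range φ) → u₀.1 ∈ S := by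
    by_cases hout : ∃ x ∈ X, x ∉ Set.range φ
    · obtain ⟨x, hx, hxφ⟩ := hout
      obtain ⟨u, huS, hu⟩ := hφ.exists_mem_of_notMem_range hX.preconnected hx hxφ hwX
      exact ⟨⟨u, hu⟩, fun _ => huS⟩
    · exact ⟨⟨w, hwX⟩, fun h => absurd h hout⟩
  let r : X → φ ⁻¹' X := fun x =>
    if h : x.1 ∈ Set.range φ then ⟨h.choose, by simp [Set.mem_preimage, h.choose_spec]⟩
    else u₀
  have hr : ∀ v (hv : φ v ∈ X), r ⟨φ v, hv⟩ = ⟨v, hv⟩ := fun v hv => by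
    have h : φ v ∈ Set.range φ := ⟨v, rfl⟩
    simp only [r, dif_pos h]
    exact Subtype.ext (φ.injective h.choose_spec)
  have hr_adj : ∀ ⦃x y : X⦄, (G.induce X).Adj x y → (H.induce (φ ⁻¹' X)).Reachable (r x) (r y) := by
    rintro ⟨x, hx⟩ ⟨y, hy⟩ hxy
    change G.Adj x y at hxy
    have hr_out : ∀ z (hz : z ∈ X), z ∉ Set.range φ → r ⟨z, hz⟩ = u₀ := fun z hz h => dif_neg h
    by_cases hxφ : x ∈ Set.range φ <;> by_cases hyφ : y ∈ Set.range φ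
    · obtain ⟨v, rfl⟩ := hxφ
      obtain ⟨v', rfl⟩ := hyφ
      rw [hr, hr]
      exact Adj.reachable (φ.map_adj_iff.mp hxy)
    · obtain ⟨v, rfl⟩ := hxφ
      rw [hr, hr_out y hy hyφ]
      exact hS.reachable_induce (hφ hxy.symm hyφ) (hu₀ ⟨y, hy, hyφ⟩)
    · obtain ⟨v', rfl⟩ := hyφ
      rw [hr, hr_out x hx hxφ]
      exact hS.reachable_induce (hu₀ ⟨x, hx, hxφ⟩) (hφ hxy hxφ)
    · rw [hr_out x hx hxφ, hr_out y hy hyφ]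
  refine (connected_iff_exists_forall_reachable _).mpr ⟨⟨w, hwX⟩, fun ⟨v, hv⟩ => ?_⟩
  have := (hX.preconnected ⟨φ w, hwX⟩ ⟨φ v, hv⟩).map_of_forall_adj r hr_adj
  rwa [hr, hr] at this

theorem AttachesAlong.exists_mem_of_adj (hφ : AttachesAlong φ S) {X : Set W}
    (hX : (G.induce X).Preconnected) (hXφ : (X ∩ Set.range φ).Nonempty) {x y : W} (hx : x ∈ X)
    (hxy : G.Adj x y) (hout : x ∉ Set.range φ ∨ y ∉ Set.range φ) : ∃ u ∈ S, φ u ∈ X := by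
  by_cases hxφ : x ∈ Set.range φ
  · obtain ⟨v, rfl⟩ := hxφ
    exact ⟨v, hφ hxy.symm (hout.resolve_left (not_not.mpr ⟨v, rfl⟩)), hx⟩
  · obtain ⟨-, hw, w, rfl⟩ := hXφ
    exact hφ.exists_mem_of_notMem_range hX hx hxφ hw

theorem AttachesAlong.inter_range_nonempty (hφ : AttachesAlong φ S) {X Y : Set W}
    (hX : X ⊆ Set.range φ \ φ '' S) (hXY : ∃ x ∈ X, ∃ y ∈ Y, G.Adj x y) :
    (Y ∩ Set.range φ).Nonempty := by
  obtain ⟨x, hx, y, hy, hxy⟩ := hXY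
  by_contra hY
  obtain ⟨⟨v, rfl⟩, hvS⟩ := hX hx
  exact hvS ⟨v, hφ hxy.symm fun hyφ => hY ⟨y, hy, hyφ⟩, rfl⟩

variable {s t : ℕ} {Z : Fin s → Set W} {Y : Fin t → Set W}

theorem IsKstModel.preimage (hS : H.IsClique S) (hφ : AttachesAlong φ S) (hM : IsKstModel G Z Y)
    (hZ : ∀ i, (Z i ∩ Set.range φ).Nonempty) (hY : ∀ j, (Y j ∩ Set.range φ).Nonempty) :
    IsKstModel H (fun i => φ ⁻¹' Z i) (fun j => φ ⁻¹' Y j) where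
  left_nonempty i := by
    obtain ⟨-, hx, v, rfl⟩ := hZ i
    exact ⟨v, hx⟩
  right_nonempty j := by
    obtain ⟨-, hy, v, rfl⟩ := hY j
    exact ⟨v, hy⟩
  left_disjoint i i' h := (hM.left_disjoint i i' h).preimage φ
  right_disjoint j j' h := (hM.right_disjoint j j' h).preimage φ
  left_right_disjoint i j := (hM.left_right_disjoint i j).preimage φ
  left_connected i := hφ.connected_induce_preimage hS (hM.left_connected i) (hZ i)
  right_connected j := hφ.connected_induce_preimage hS (hM.right_connected j) (hY j)
  exists_adj i j := by
    obtain ⟨x, hx, y, hy, hxy⟩ := hM.exists_adj i j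
    by_cases hin : x ∈ Set.range φ ∧ y ∈ Set.range φ
    · obtain ⟨⟨v, rfl⟩, ⟨v', rfl⟩⟩ := hin
      exact ⟨v, hx, v', hy, φ.map_adj_iff.mp hxy⟩
    -- An edge leaving the image of `φ` forces both branch sets to reach the clique `S`.
    rw [not_and_or] at hin
    obtain ⟨u, huS, hu⟩ :=
      hφ.exists_mem_of_adj (hM.left_connected i).preconnected (hZ i) hx hxy hin
    obtain ⟨u', hu'S, hu'⟩ :=
      hφ.exists_mem_of_adj (hM.right_connected j).preconnected (hY j) hy hxy.symm hin.symm
    refine ⟨u, hu, u', hu', hS huS hu'S fun h => ?_⟩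
    exact Set.disjoint_left.mp (hM.left_right_disjoint i j) hu (h ▸ hu')

theorem AttachesAlong.hasKstMinor (hS : H.IsClique S) (hφ : AttachesAlong φ S)
    (hM : IsKstModel G Z Y) {i₀ : Fin s} {j₀ : Fin t} (hZ : Z i₀ ⊆ Set.range φ \ φ '' S)
    (hY : Y j₀ ⊆ Set.range φ \ φ '' S) : HasKstMinor H s t := by
  refine hasKstMinor_iff.mpr ⟨_, _, hM.preimage hS hφ (fun i => ?_) fun j =>
    hφ.inter_range_nonempty hZ (hM.exists_adj i₀ j)⟩
  obtain ⟨x, hx, y, hy, hxy⟩ := hM.exists_adj i j₀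
  exact hφ.inter_range_nonempty hY ⟨y, hy, x, hx, hxy.symm⟩

end CliqueAttachment

section GluedCopies

variable {V : Type*} (H : SimpleGraph V) (B : Set V) (ι : Type*)

open Classical in
noncomputable def gluedCopy (i : ι) : V ↪ B ⊕ (ι × ↥Bᶜ) where
  toFun v := if h : v ∈ B then .inl ⟨v, h⟩ else .inr (i, ⟨v, h⟩)
  inj' v w h := by
    simp only at h
    split_ifs at h <;> simp_all

noncomputable def gluedCopies : SimpleGraph (B ⊕ (ι × ↥Bᶜ)) := ⨆ i, H.map (gluedCopy B ι i)

variable {H B ι}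

theorem gluedCopy_of_mem {v : V} (h : v ∈ B) (i : ι) : gluedCopy B ι i v = .inl ⟨v, h⟩ :=
  dif_pos h

theorem gluedCopy_of_notMem {v : V} (h : v ∉ B) (i : ι) :
    gluedCopy B ι i v = .inr (i, ⟨v, h⟩) :=
  dif_neg h

theorem gluedCopy_eq_gluedCopy {i j : ι} {v w : V} :
    gluedCopy B ι i v = gluedCopy B ι j w ↔ v = w ∧ (v ∉ B → i = j) := by
  by_cases hv : v ∈ B <;> by_cases hw : w ∈ B <;>
    simp [gluedCopy_of_mem, gluedCopy_of_notMem, hv, hw] <;> grind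

theorem gluedCopies_adj {x y : B ⊕ (ι × ↥Bᶜ)} :
    (gluedCopies H B ι).Adj x y ↔
      ∃ i v w, H.Adj v w ∧ gluedCopy B ι i v = x ∧ gluedCopy B ι i w = y := by
  simp [gluedCopies]

theorem gluedCopies_adj_gluedCopy {i : ι} {v w : V} :
    (gluedCopies H B ι).Adj (gluedCopy B ι i v) (gluedCopy B ι i w) ↔ H.Adj v w := by
  refine ⟨fun h => ?_, fun h => gluedCopies_adj.mpr ⟨i, v, w, h, rfl, rfl⟩⟩
  obtain ⟨j, v', w', hvw, hv, hw⟩ := gluedCopies_adj.mp h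
  rwa [← (gluedCopy_eq_gluedCopy.mp hv).1, ← (gluedCopy_eq_gluedCopy.mp hw).1]

theorem gluedCopies_adj_inr {i j : ι} {a b : ↥Bᶜ}
    (h : (gluedCopies H B ι).Adj (.inr (i, a)) (.inr (j, b))) : i = j := by
  obtain ⟨c, v, w, -, hv, hw⟩ := gluedCopies_adj.mp h
  rw [← gluedCopy_of_notMem a.2] at hv
  rw [← gluedCopy_of_notMem b.2] at hw
  obtain ⟨rfl, hci⟩ := gluedCopy_eq_gluedCopy.mp hv
  obtain ⟨rfl, hcj⟩ := gluedCopy_eq_gluedCopy.mp hw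
  exact (hci a.2).symm.trans (hcj b.2)

variable (H B ι) in
noncomputable def gluedCopyEmbedding (i : ι) : H ↪g gluedCopies H B ι where
  toEmbedding := gluedCopy B ι i
  map_rel_iff' := gluedCopies_adj_gluedCopy

theorem attachesAlong_gluedCopyEmbedding (i : ι) :
    AttachesAlong (gluedCopyEmbedding H B ι i) B := by
  intro x v hxv hx
  obtain ⟨j, v', w', -, rfl, hw'⟩ := gluedCopies_adj.mp hxv
  obtain ⟨rfl, hji⟩ := gluedCopy_eq_gluedCopy.mp hw'
  by_contra hv
  exact hx ⟨v', by rw [← hji hv]; rfl⟩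

theorem range_inr_subset (i : ι) :
    Set.range (fun a : ↥Bᶜ => (.inr (i, a) : B ⊕ (ι × ↥Bᶜ))) ⊆
      Set.range (gluedCopyEmbedding H B ι i) \ gluedCopyEmbedding H B ι i '' B := by
  rintro - ⟨a, rfl⟩
  refine ⟨⟨a, gluedCopy_of_notMem a.2 i⟩, ?_⟩
  rintro ⟨b, hb, h⟩
  simp [gluedCopyEmbedding, gluedCopy_of_mem hb] at h

theorem subset_range_inr_of_connected {X : Set (B ⊕ (ι × ↥Bᶜ))}
    (hX : ((gluedCopies H B ι).induce X).Connected) (hXB : ∀ b, .inl b ∉ X) :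
    ∃ i, X ⊆ Set.range (fun a : ↥Bᶜ => (.inr (i, a) : B ⊕ (ι × ↥Bᶜ))) := by
  let copyIndex : X → Option ι := fun x => Sum.elim (fun _ => none) (fun p => some p.1) x.1
  have h_adj : ∀ ⦃x y : X⦄, ((gluedCopies H B ι).induce X).Adj x y →
      (⊥ : SimpleGraph (Option ι)).Reachable (copyIndex x) (copyIndex y) := by
    rintro ⟨x, hx⟩ ⟨y, hy⟩ hxy
    rcases x with b | ⟨i, a⟩
    · exact absurd hx (hXB b)
    rcases y with b | ⟨j, b⟩
    · exact absurd hy (hXB b)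
    exact reachable_bot.mpr (congrArg some (gluedCopies_adj_inr hxy))
  obtain ⟨⟨_ | ⟨i, a⟩, hx₀⟩⟩ := hX.nonempty
  · exact absurd hx₀ (hXB _)
  refine ⟨i, fun x hx => ?_⟩
  have := reachable_bot.mp ((hX.preconnected ⟨_, hx₀⟩ ⟨x, hx⟩).map_of_forall_adj copyIndex h_adj)
  rcases x with b | ⟨j, b⟩
  · exact absurd hx (hXB b)
  · cases this
    exact ⟨b, rfl⟩

theorem hasKstMinor_of_gluedCopies {B : Finset V} (hB : H.IsClique (B : Set V)) {s t : ℕ}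
    (hs : #B < s) (ht : #B < t) (h : HasKstMinor (gluedCopies H B ι) s t) :
    HasKstMinor H s t := by
  obtain ⟨Z, Y, hM⟩ := hasKstMinor_iff.mp h
  have hcard : Fintype.card (B : Set V) = #B := by simp
  obtain ⟨i₀, hi₀⟩ := exists_forall_notMem_of_card_lt Sum.inl hM.left_disjoint (hcard ▸ hs)
  obtain ⟨j₀, hj₀⟩ := exists_forall_notMem_of_card_lt Sum.inl hM.right_disjoint (hcard ▸ ht)
  obtain ⟨c, hc⟩ := subset_range_inr_of_connected (hM.left_connected i₀) hi₀
  obtain ⟨c', hc'⟩ := subset_range_inr_of_connected (hM.right_connected j₀) hj₀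
  obtain rfl : c = c' := by
    obtain ⟨x, hx, y, hy, hxy⟩ := hM.exists_adj i₀ j₀
    obtain ⟨a, rfl⟩ := hc hx
    obtain ⟨b, rfl⟩ := hc' hy
    exact gluedCopies_adj_inr hxy
  exact (attachesAlong_gluedCopyEmbedding c).hasKstMinor hB hM
    (hc.trans (range_inr_subset c)) (hc'.trans (range_inr_subset c))

end GluedCopies

section ListAssignment

variable {V : Type} [Encodable V] (H : SimpleGraph V) [DecidableRel H.Adj] (B : Finset V)
  (k d : ℕ)

def blockColour (v : V) (j : ℕ) : ℕ := Nat.pair (Encodable.encode v + 1) j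

theorem blockColour_inj {v w : V} {i j : ℕ} (h : blockColour v i = blockColour w j) :
    v = w ∧ i = j := by
  obtain ⟨hvw, hij⟩ := Nat.pair_eq_pair.mp h
  exact ⟨Encodable.encode_injective (by omega), hij⟩

theorem blockColour_ne_pair_zero (v : V) (i j : ℕ) : blockColour v i ≠ Nat.pair 0 j :=
  fun h => Nat.succ_ne_zero _ (Nat.pair_eq_pair.mp h).1

def gluedLists : B ⊕ ((B → Fin k) × ↥(B : Set V)ᶜ) → Finset ℕ
  | .inl b => (range k).image (blockColour b.1)
  | .inr (c, a) =>
      ((B.attach.filter fun b : B => H.Adj a b).image fun b : B => blockColour b.1 (c b)) ∪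
        (range (k - d)).image (Nat.pair 0)

variable {H B k d}

theorem le_card_gluedLists (hd : ∀ a ∉ B, d ≤ #{b ∈ B | H.Adj a b}) (x) :
    k ≤ #(gluedLists H B k d x) := by
  rcases x with b | ⟨c, a⟩
  · exact ((card_image_of_injective _ fun i j h => (blockColour_inj h).2).trans
      (card_range k)).ge
  have h_disj : Disjoint ((B.attach.filter fun b : B => H.Adj a b).image
      fun b : B => blockColour b.1 (c b)) ((range (k - d)).image (Nat.pair 0)) := by
    simp only [Finset.disjoint_left, mem_image]
    rintro - ⟨b, -, rfl⟩ ⟨j, -, h⟩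
    exact blockColour_ne_pair_zero _ _ _ h.symm
  have h_img : #((B.attach.filter fun b : B => H.Adj a b).image
      fun b : B => blockColour b.1 (c b)) = #{b ∈ B | H.Adj a b} := by
    rw [card_image_of_injective _ fun b b' h => Subtype.ext (blockColour_inj h).1,
      filter_attach, card_map, card_attach]
  have h_fresh : #((range (k - d)).image (Nat.pair 0)) = k - d :=
    (card_image_of_injective _ fun i j h => (Nat.pair_eq_pair.mp h).2).trans (card_range _)
  have := hd a a.2
  rw [gluedLists, card_union_of_disjoint h_disj, h_img, h_fresh]
  omega

theorem not_choosable_gluedCopies {A : Finset V} (hA : H.IsClique (A : Set V))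
    (hAB : Disjoint A B) (hd : ∀ a ∉ B, d ≤ #{b ∈ B | H.Adj a b}) (hk : k - d < #A) :
    ¬ Choosable (gluedCopies H B (B → Fin k)) k := by
  intro hch
  obtain ⟨f, hfL, hf⟩ := hch (gluedLists H B k d) (le_card_gluedLists hd)
  have h_inl : ∀ b : B, ∃ j : Fin k, blockColour b.1 j = f (.inl b) := fun b => by
    obtain ⟨j, hj, h⟩ := mem_image.mp (hfL (.inl b))
    exact ⟨⟨j, mem_range.mp hj⟩, h⟩
  choose c hc using h_inl
  have h_fresh : ∀ a ∈ A, f (gluedCopy B _ c a) ∈ (range (k - d)).image (Nat.pair 0) := by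
    intro a ha
    have haB : a ∉ B := Finset.disjoint_left.mp hAB ha
    rw [gluedCopy_of_notMem haB]
    refine (mem_union.mp (hfL (.inr (c, ⟨a, haB⟩)))).resolve_left fun h => ?_
    obtain ⟨b, hb, hbc⟩ := mem_image.mp h
    have h_adj := (gluedCopies_adj_gluedCopy (B := B) (i := c)).mpr (mem_filter.mp hb).2.symm
    rw [gluedCopy_of_mem b.2, gluedCopy_of_notMem haB] at h_adj
    exact hf _ _ h_adj ((hc b).symm.trans hbc)
  have h_inj : Set.InjOn (fun a : V => f (gluedCopy B _ c a)) A := fun a ha a' ha' h => by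
    by_contra hne
    exact hf _ _ (gluedCopies_adj_gluedCopy.mpr (hA ha ha' hne)) h
  have := (card_le_card_of_injOn _ h_fresh h_inj).trans card_image_le
  rw [card_range] at this
  omega

end ListAssignment

theorem card_le_card_filter_adj_add_ncard {V : Type*} [Finite V] {H : SimpleGraph V}
    [DecidableRel H.Adj] {B : Finset V} {a : V} (ha : a ∉ B) :
    #B ≤ #{b ∈ B | H.Adj a b} + {u | u ≠ a ∧ ¬ H.Adj a u}.ncard := by
  rw [← card_filter_add_card_filter_not (s := B) (H.Adj a)]
  refine Nat.add_le_add_left ?_ _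
  rw [← Set.ncard_coe_finset]
  refine Set.ncard_le_ncard (fun b hb => ?_)
  rw [coe_filter] at hb
  exact ⟨fun h => ha (h ▸ hb.1), hb.2⟩

theorem kst_parameter_bounds {ε C : ℝ} (hε : 0 < ε ∧ ε < 1 / 2) {s t m e : ℕ}
    (hεs : 6 ≤ ε * s) (hst : s ≤ t) (htC : (t : ℝ) ≤ C * s)
    (hm_le : (m : ℝ) ≤ (1 - ε) * (s + t)) (hm_gt : (1 - ε) * (s + t) < m + 1)
    (he : (e : ℝ) ≤ ε / 2 * (s - 1 : ℕ)) :
    s ≤ m ∧ (m : ℝ) ≤ (2 * C + 2) * (s - 1 : ℕ) ∧ e < s - 1 ∧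
      (1 - ε) * (2 * s + t) ≤ (m + (s - 1) - 1 - e : ℕ) := by
  obtain ⟨hε₀, hε₁⟩ := hε
  have hs : 13 ≤ s := by
    have : (12 : ℝ) < s := by nlinarith
    exact_mod_cast this
  have hst' : (s : ℝ) ≤ t := by exact_mod_cast hst
  have hs_cast : ((s - 1 : ℕ) : ℝ) = s - 1 := by
    rw [Nat.cast_sub (by omega), Nat.cast_one]
  rw [hs_cast] at he
  have hsm : s ≤ m := by
    have : (s : ℝ) < m + 1 := by nlinarith
    exact Nat.lt_succ_iff.mp (by exact_mod_cast this)
  have hes : e < s - 1 := by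
    have : (e : ℝ) < ((s - 1 : ℕ) : ℝ) := by rw [hs_cast]; nlinarith
    exact_mod_cast this
  refine ⟨hsm, by rw [hs_cast]; nlinarith, hes, ?_⟩
  rw [Nat.cast_sub (by omega), Nat.cast_sub (by omega), Nat.cast_add, hs_cast, Nat.cast_one]
  linarith

theorem stmt15_general (ε C C' : ℝ) (hε : 0 < ε ∧ ε < 1 / 2) (hC' : C' = 2 * C + 2)
    (hyp : ∃ n₁ : ℕ, ∀ n m : ℕ, n₁ ≤ n → n ≤ m → (m : ℝ) ≤ C' * n →
      ∃ (H : SimpleGraph (Fin (m + n))) (A B : Finset (Fin (m + n))),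
        A.card = m ∧ B.card = n ∧ Disjoint A B ∧ A ∪ B = Finset.univ ∧
        (∀ x ∈ A, ∀ y ∈ A, x ≠ y → H.Adj x y) ∧
        (∀ x ∈ B, ∀ y ∈ B, x ≠ y → H.Adj x y) ∧
        (∀ v, (({u | u ≠ v ∧ ¬ H.Adj v u}).ncard : ℝ) ≤ ε / 2 * n) ∧
        (∀ s t : ℕ, 1 ≤ s → s ≤ t → n ≤ s → (m : ℝ) ≤ (1 - ε) * ((s : ℝ) + t) →
          ¬ HasKstMinor H s t)) :
    ∃ N : ℕ, ∀ s t : ℕ, N ≤ s → s ≤ t → (t : ℝ) ≤ C * s →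
      ∃ (W : Type) (G : SimpleGraph W), ¬ HasKstMinor G s t ∧
        ∃ k : ℕ, (1 - ε) * (2 * s + t) ≤ (k : ℝ) ∧ ¬ Choosable G k := by
  classical
  obtain ⟨n₁, hyp⟩ := hyp
  refine ⟨max (n₁ + 1) ⌈6 / ε⌉₊, fun s t hs hst htC => ?_⟩
  have hεs : 6 ≤ ε * s := by
    have := (Nat.le_ceil (6 / ε)).trans (Nat.cast_le.mpr (le_of_max_le_right hs))
    rwa [div_le_iff₀ hε.1, mul_comm] at this
  set m := ⌊(1 - ε) * (s + t)⌋₊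
  set e := ⌊ε / 2 * (s - 1 : ℕ)⌋₊
  have hm_le : (m : ℝ) ≤ (1 - ε) * (s + t) :=
    Nat.floor_le (mul_nonneg (by linarith) (by positivity))
  obtain ⟨hsm, hmC, hes, hk⟩ := kst_parameter_bounds hε hεs hst htC hm_le
    (Nat.lt_floor_add_one _) (Nat.floor_le (by have := hε.1; positivity))
  obtain ⟨H, A, B, hA, hB, hAB, -, hAcl, hBcl, hnon, hfree⟩ :=
    hyp (s - 1) m (by omega) (by omega) (by rwa [hC'])
  have hdeg : ∀ a ∉ B, s - 1 - e ≤ #{b ∈ B | H.Adj a b} := fun a ha => by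
    have := card_le_card_filter_adj_add_ncard (H := H) ha
    have := Nat.le_floor (hnon a)
    omega
  refine ⟨_, gluedCopies H B (B → Fin (m + (s - 1) - 1 - e)), fun h => ?_, _, hk,
    not_choosable_gluedCopies hAcl hAB hdeg (by omega)⟩
  exact hfree s t (by omega) hst (by omega) hm_le
    (hasKstMinor_of_gluedCopies hBcl (by omega) (by omega) h)

/-- Reduction step of the main theorem: if for every pair `n ≤ m` with `n`
sufficiently large and `m ≤ C'n` (where `C' = 2C + 2`) there is a graph `H` on
disjoint cliques `A` (size `m`) and `B` (size `n`) in which every vertex has at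
most `(ε/2)·n` non-neighbors and which has no `K_{s,t}`-minor whenever `n ≤ s ≤ t`
and `m ≤ (1−ε)(s+t)`, then for all `s ≤ t ≤ Cs` with `s` sufficiently large there
is a graph with no `K_{s,t}`-minor whose list chromatic number exceeds
`(1−ε)(2s+t)`. -/
theorem stmt15 (ε C C' : ℝ) (hε : 0 < ε ∧ ε < 1 / 2) (hC : 1 ≤ C) (hC' : C' = 2 * C + 2)
    (hyp : ∃ n₁ : ℕ, ∀ n m : ℕ, n₁ ≤ n → n ≤ m → (m : ℝ) ≤ C' * n →
      ∃ (H : SimpleGraph (Fin (m + n))) (A B : Finset (Fin (m + n))),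
        A.card = m ∧ B.card = n ∧ Disjoint A B ∧ A ∪ B = Finset.univ ∧
        (∀ x ∈ A, ∀ y ∈ A, x ≠ y → H.Adj x y) ∧
        (∀ x ∈ B, ∀ y ∈ B, x ≠ y → H.Adj x y) ∧
        (∀ v, (({u | u ≠ v ∧ ¬ H.Adj v u}).ncard : ℝ) ≤ ε / 2 * n) ∧
        (∀ s t : ℕ, 1 ≤ s → s ≤ t → n ≤ s → (m : ℝ) ≤ (1 - ε) * ((s : ℝ) + t) →
          ¬ HasKstMinor H s t)) :
    ∃ N : ℕ, ∀ s t : ℕ, N ≤ s → s ≤ t → (t : ℝ) ≤ C * s →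
      ∃ (W : Type) (G : SimpleGraph W), ¬ HasKstMinor G s t ∧
        ∃ k : ℕ, (1 - ε) * (2 * s + t) ≤ (k : ℝ) ∧ ¬ Choosable G k :=
  stmt15_general ε C C' hε hC' hyp
end

section
/- For every k ∈ ℕ there exist a bipartite graph G and a list assignment L with |L(v)| ≥ k for every vertex such that G has no L-coloring; hence the list chromatic number of bipartite graphs is unbounded even though their chromatic number is at most 2. -/
/-!
Take `K_{m,m}` with both sides indexed by the `k`-subsets of a set `S` of `2k - 1` colours and
give every vertex its own index as list. In a list colouring, let `C` be the set of colours used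
on the left side. If `|C| ≥ k`, the right vertex whose list is a `k`-subset of `C` shares a colour
with some left vertex; otherwise `|S \ C| ≥ k` and the left vertex with a `k`-subset of `S \ C`
as list cannot be coloured from `C`.
-/

open Finset

theorem exists_choice_eq_choice_of_two_mul_le_card_add_one {β : Type*} [DecidableEq β]
    {S : Finset β} {k : ℕ} (hS : 2 * k ≤ #S + 1) (f g : S.powersetCard k → β)
    (hf : ∀ A, f A ∈ A.1) (hg : ∀ B, g B ∈ B.1) : ∃ A B, f A = g B := by
  set C := S.filter fun x => ∃ A, f A = x
  have hCS : C ⊆ S := filter_subset _ _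
  by_cases hC : k ≤ #C
  · obtain ⟨B, hBC, hB⟩ := exists_subset_card_eq hC
    have hB_mem : B ∈ S.powersetCard k := mem_powersetCard.2 ⟨hBC.trans hCS, hB⟩
    obtain ⟨-, A, hA⟩ := mem_filter.1 (hBC (hg ⟨B, hB_mem⟩))
    exact ⟨A, _, hA⟩
  · have hSC : k ≤ #(S \ C) := by
      rw [card_sdiff_of_subset hCS]
      omega
    obtain ⟨A, hAC, hA⟩ := exists_subset_card_eq hSC
    have hA_mem : A ∈ S.powersetCard k := mem_powersetCard.2 ⟨hAC.trans sdiff_subset, hA⟩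
    have hfA := hAC (hf ⟨A, hA_mem⟩)
    exact absurd (mem_filter.2 ⟨(mem_sdiff.1 hfA).1, _, rfl⟩) (mem_sdiff.1 hfA).2

theorem completeBipartiteGraph_not_listColorable_powersetCard {β : Type*} [DecidableEq β]
    {S : Finset β} {k : ℕ} (hS : 2 * k ≤ #S + 1) :
    ¬ ∃ c : S.powersetCard k ⊕ S.powersetCard k → β,
      (∀ v, c v ∈ (Sum.elim Subtype.val Subtype.val v : Finset β)) ∧
      ∀ u v, (completeBipartiteGraph _ _).Adj u v → c u ≠ c v := by
  rintro ⟨c, hc, hproper⟩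
  obtain ⟨A, B, hAB⟩ := exists_choice_eq_choice_of_two_mul_le_card_add_one hS
    (c ∘ Sum.inl) (c ∘ Sum.inr) (fun A => hc (.inl A)) (fun B => hc (.inr B))
  exact hproper (.inl A) (.inr B) (by simp) hAB

/-- For every `k` there is a (finite) bipartite graph `G` (i.e. `χ(G) ≤ 2`) and a
list assignment with all lists of size at least `k` admitting no proper coloring
from the lists: the list chromatic number of bipartite graphs is unbounded. -/
theorem stmt17 (k : ℕ) :
    ∃ (V : Type) (_ : Fintype V) (G : SimpleGraph V) (L : V → Finset ℕ),
      G.Colorable 2 ∧ (∀ v, k ≤ (L v).card) ∧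
      ¬ ∃ c : V → ℕ, (∀ v, c v ∈ L v) ∧ ∀ u v, G.Adj u v → c u ≠ c v := by
  let P := (range (2 * k - 1)).powersetCard k
  have hlist_card : ∀ v : P ⊕ P, k ≤ #(Sum.elim Subtype.val Subtype.val v : Finset ℕ) := by
    rintro (A | A) <;> exact (mem_powersetCard.1 A.2).2.ge
  exact ⟨P ⊕ P, inferInstance, completeBipartiteGraph P P, Sum.elim Subtype.val Subtype.val,
    by simpa using (SimpleGraph.CompleteBipartiteGraph.bicoloring P P).colorable, hlist_card,
    completeBipartiteGraph_not_listColorable_powersetCard (by rw [card_range]; omega)⟩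
end
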